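/- (Equi-expressivity) Over any assignment structure 𝔄, the first-order modal μ-calculus and first-order game logic are equi-expressive: (1) 𝔄⟦φ⟧_GL = 𝔄⟦φ♯⟧_μ for every GL-formula φ (without propositional variables), and (2) 𝔄⟦ψ⟧_μ = 𝔄⟦ψ♭⟧_GL for every Lμ-formula ψ (without free propositional variables), where ψ♭ = ⟨ψ^η⟩⊤ and η is the dictionary with η(X) = 0 for all X. -/

import Mathlib

open FirstOrder Set

namespace GLMu

/-! ## Barred propositional variables -/

/-- Barred propositional variables: `Sum.inl X` is `X`, `Sum.inr X` is `X̄`. -/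
def bar {V : Type*} : V ⊕ V → V ⊕ V := Sum.elim Sum.inr Sum.inl

def unbar {V : Type*} : V ⊕ V → V := Sum.elim id id

/-! ## First-order literals -/

/-- First-order literals with equality: atomic formulas and their negations. -/
inductive Lit (L : Language) (𝒳 : Type*) where
  | eq (t₁ t₂ : L.Term 𝒳)
  | ne (t₁ t₂ : L.Term 𝒳)
  | rel {n : ℕ} (R : L.Relations n) (ts : Fin n → L.Term 𝒳)
  | nrel {n : ℕ} (R : L.Relations n) (ts : Fin n → L.Term 𝒳)

namespace Lit

variable {L : Language} {𝒳 : Type*}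

/-- Negation of a literal. -/
def neg : Lit L 𝒳 → Lit L 𝒳
  | .eq t₁ t₂ => .ne t₁ t₂
  | .ne t₁ t₂ => .eq t₁ t₂
  | .rel R ts => .nrel R ts
  | .nrel R ts => .rel R ts

variable {M : Type*} [L.Structure M]

/-- Semantics of a literal: the set of states in which it is true. -/
def sem : Lit L 𝒳 → Set (𝒳 → M)
  | .eq t₁ t₂ => {ω | t₁.realize ω = t₂.realize ω}
  | .ne t₁ t₂ => {ω | t₁.realize ω ≠ t₂.realize ω}
  | .rel R ts => {ω | Language.Structure.RelMap R (fun i => (ts i).realize ω)}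
  | .nrel R ts => {ω | ¬ Language.Structure.RelMap R (fun i => (ts i).realize ω)}

end Lit

/-- The set of object variables occurring in a term. -/
def tvars {L : Language} {𝒳 : Type*} : L.Term 𝒳 → Set 𝒳
  | .var x => {x}
  | .func _ ts => ⋃ i, tvars (ts i)

/-- The set of object variables occurring in a literal. -/
def Lit.ovars {L : Language} {𝒳 : Type*} : Lit L 𝒳 → Set 𝒳
  | .eq t₁ t₂ => tvars t₁ ∪ tvars t₂
  | .ne t₁ t₂ => tvars t₁ ∪ tvars t₂
  | .rel _ ts => ⋃ i, tvars (ts i)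
  | .nrel _ ts => ⋃ i, tvars (ts i)

/-! ## Syntax of the first-order modal μ-calculus -/

/-- Formulas of the first-order modal μ-calculus `Lμ_𝒱` (raw syntax). -/
inductive MuF (L : Language) (𝒳 Act V : Type*) where
  | lit (p : Lit L 𝒳)
  | var (X : V ⊕ V)
  | or (φ₁ φ₂ : MuF L 𝒳 Act V)
  | and (φ₁ φ₂ : MuF L 𝒳 Act V)
  | dia (a : Act) (φ : MuF L 𝒳 Act V)
  | box (a : Act) (φ : MuF L 𝒳 Act V)
  | mu (X : V ⊕ V) (φ : MuF L 𝒳 Act V)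
  | nu (X : V ⊕ V) (φ : MuF L 𝒳 Act V)

namespace MuF

variable {L : Language} {𝒳 Act V : Type*}

/-- The propositional variables (in `𝒱̄`) mentioned anywhere in a formula. -/
def mentions : MuF L 𝒳 Act V → Set (V ⊕ V)
  | .lit _ => ∅
  | .var X => {X}
  | .or φ ψ => φ.mentions ∪ ψ.mentions
  | .and φ ψ => φ.mentions ∪ ψ.mentions
  | .dia _ φ => φ.mentions
  | .box _ φ => φ.mentions
  | .mu X φ => {X} ∪ φ.mentions
  | .nu X φ => {X} ∪ φ.mentions

/-- Well-formedness: in `μX.ψ` and `νX.ψ` the body `ψ` may not mention `X̄`.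
This is the constraint built into the grammar of `Lμ_𝒱`. -/
def WF : MuF L 𝒳 Act V → Prop
  | .lit _ => True
  | .var _ => True
  | .or φ ψ => φ.WF ∧ ψ.WF
  | .and φ ψ => φ.WF ∧ ψ.WF
  | .dia _ φ => φ.WF
  | .box _ φ => φ.WF
  | .mu X φ => bar X ∉ φ.mentions ∧ φ.WF
  | .nu X φ => bar X ∉ φ.mentions ∧ φ.WF

/-- The free propositional variables of a formula. -/
def freeVars : MuF L 𝒳 Act V → Set (V ⊕ V)
  | .lit _ => ∅
  | .var X => {X}
  | .or φ ψ => φ.freeVars ∪ ψ.freeVars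
  | .and φ ψ => φ.freeVars ∪ ψ.freeVars
  | .dia _ φ => φ.freeVars
  | .box _ φ => φ.freeVars
  | .mu X φ => φ.freeVars \ {X, bar X}
  | .nu X φ => φ.freeVars \ {X, bar X}

/-- The propositional variables bound by a fixpoint operator somewhere in a formula. -/
def boundVars : MuF L 𝒳 Act V → Set (V ⊕ V)
  | .lit _ => ∅
  | .var _ => ∅
  | .or φ ψ => φ.boundVars ∪ ψ.boundVars
  | .and φ ψ => φ.boundVars ∪ ψ.boundVars
  | .dia _ φ => φ.boundVars
  | .box _ φ => φ.boundVars
  | .mu X φ => {X} ∪ φ.boundVars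
  | .nu X φ => {X} ∪ φ.boundVars

/-- The list of bound propositional variables, with multiplicity. -/
def boundList : MuF L 𝒳 Act V → List (V ⊕ V)
  | .lit _ => []
  | .var _ => []
  | .or φ ψ => φ.boundList ++ ψ.boundList
  | .and φ ψ => φ.boundList ++ ψ.boundList
  | .dia _ φ => φ.boundList
  | .box _ φ => φ.boundList
  | .mu X φ => X :: φ.boundList
  | .nu X φ => X :: φ.boundList

/-- Every propositional variable is bound at most once. -/
def BoundOnce (φ : MuF L 𝒳 Act V) : Prop := (φ.boundList.map unbar).Nodup

/-- The transition symbols occurring in a formula. -/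
def acts : MuF L 𝒳 Act V → Set Act
  | .lit _ => ∅
  | .var _ => ∅
  | .or φ ψ => φ.acts ∪ ψ.acts
  | .and φ ψ => φ.acts ∪ ψ.acts
  | .dia a φ => {a} ∪ φ.acts
  | .box a φ => {a} ∪ φ.acts
  | .mu _ φ => φ.acts
  | .nu _ φ => φ.acts

/-- The complement `φ̄` of an `Lμ_𝒱`-formula. -/
def compl : MuF L 𝒳 Act V → MuF L 𝒳 Act V
  | .lit p => .lit p.neg
  | .var X => .var (bar X)
  | .or φ ψ => .and φ.compl ψ.compl
  | .and φ ψ => .or φ.compl ψ.compl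
  | .dia a φ => .box a φ.compl
  | .box a φ => .dia a φ.compl
  | .mu X φ => .nu (bar X) φ.compl
  | .nu X φ => .mu (bar X) φ.compl

/-- Implication `φ → ψ`, an abbreviation for `φ̄ ∨ ψ`. -/
def imp (φ ψ : MuF L 𝒳 Act V) : MuF L 𝒳 Act V := .or φ.compl ψ

/-- Bi-implication `φ ↔ ψ`. -/
def iff (φ ψ : MuF L 𝒳 Act V) : MuF L 𝒳 Act V := .and (imp φ ψ) (imp ψ φ)

variable [DecidableEq V]

/-- Substitution `φ[ψ/X]` of `ψ` for all free occurrences of the propositional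
variable `X` (and of `ψ̄` for all free occurrences of its complement). -/
def subst (X : V ⊕ V) (ψ : MuF L 𝒳 Act V) : MuF L 𝒳 Act V → MuF L 𝒳 Act V
  | .lit p => .lit p
  | .var Y => if Y = X then ψ else if Y = bar X then ψ.compl else .var Y
  | .or φ₁ φ₂ => .or (subst X ψ φ₁) (subst X ψ φ₂)
  | .and φ₁ φ₂ => .and (subst X ψ φ₁) (subst X ψ φ₂)
  | .dia a φ => .dia a (subst X ψ φ)
  | .box a φ => .box a (subst X ψ φ)
  | .mu Y φ => if X = Y ∨ X = bar Y then .mu Y φ else .mu Y (subst X ψ φ)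
  | .nu Y φ => if X = Y ∨ X = bar Y then .nu Y φ else .nu Y (subst X ψ φ)

/-- `X` is free for `ψ` in `φ`: no free occurrence of `X` in `φ` is in the scope of a
fixpoint operator binding a free propositional variable of `ψ`. -/
def FreeFor (X : V ⊕ V) (ψ : MuF L 𝒳 Act V) : MuF L 𝒳 Act V → Prop
  | .lit _ => True
  | .var _ => True
  | .or φ₁ φ₂ => FreeFor X ψ φ₁ ∧ FreeFor X ψ φ₂
  | .and φ₁ φ₂ => FreeFor X ψ φ₁ ∧ FreeFor X ψ φ₂
  | .dia _ φ => FreeFor X ψ φ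
  | .box _ φ => FreeFor X ψ φ
  | .mu Y φ => X = Y ∨ X = bar Y ∨
      (((X ∈ φ.freeVars ∨ bar X ∈ φ.freeVars) → (Y ∉ ψ.freeVars ∧ bar Y ∉ ψ.freeVars)) ∧
        FreeFor X ψ φ)
  | .nu Y φ => X = Y ∨ X = bar Y ∨
      (((X ∈ φ.freeVars ∨ bar X ∈ φ.freeVars) → (Y ∉ ψ.freeVars ∧ bar Y ∉ ψ.freeVars)) ∧
        FreeFor X ψ φ)

end MuF

/-! ## Semantics of the first-order modal μ-calculus -/

section MuSem

variable {L : Language} {𝒳 Act V : Type*} {M : Type*} [L.Structure M] [DecidableEq V]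

/-- The extension of a valuation `Ω : 𝒱 → 𝒫(𝒮)` to barred propositional variables,
with `Ω(X̄) = 𝒮 ∖ Ω(X)`. -/
def barVal (Ω : V → Set (𝒳 → M)) : V ⊕ V → Set (𝒳 → M) :=
  Sum.elim Ω (fun x => (Ω x)ᶜ)

/-- The modified valuation `Ω[E/X]` for `X ∈ 𝒱̄`. -/
def modif (Ω : V → Set (𝒳 → M)) : V ⊕ V → Set (𝒳 → M) → V → Set (𝒳 → M)
  | .inl x, E => Function.update Ω x E
  | .inr x, E => Function.update Ω x Eᶜ

variable (tr : Act → (𝒳 → M) → (𝒳 → M) → Prop)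

/-- Denotational semantics of `Lμ_𝒱`-formulas. -/
def MuF.sem : MuF L 𝒳 Act V → (V → Set (𝒳 → M)) → Set (𝒳 → M)
  | .lit p, _ => p.sem
  | .var X, Ω => barVal Ω X
  | .or φ ψ, Ω => φ.sem Ω ∪ ψ.sem Ω
  | .and φ ψ, Ω => φ.sem Ω ∩ ψ.sem Ω
  | .dia a φ, Ω => {ω | ∃ ν, tr a ω ν ∧ ν ∈ φ.sem Ω}
  | .box a φ, Ω => {ω | ∀ ν, tr a ω ν → ν ∈ φ.sem Ω}
  | .mu X φ, Ω => ⋂₀ {D | φ.sem (modif Ω X D) ⊆ D}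
  | .nu X φ, Ω => ⋃₀ {D | D ⊆ φ.sem (modif Ω X D)}

end MuSem

/-! ## Syntax of first-order game logic -/

universe uL vL u𝒳 uA uV

mutual
/-- Formulas of first-order game logic `GL_𝒱`. -/
inductive GLF (L : Language) (𝒳 : Type u𝒳) (Act : Type uA) (V : Type uV) where
  | lit (p : Lit L 𝒳)
  | var (X : V)
  | not (φ : GLF L 𝒳 Act V)
  | or (φ₁ φ₂ : GLF L 𝒳 Act V)
  | dia (γ : GLG L 𝒳 Act V) (φ : GLF L 𝒳 Act V)

/-- Games of first-order game logic `GL_𝒱`. -/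
inductive GLG (L : Language) (𝒳 : Type u𝒳) (Act : Type uA) (V : Type uV) where
  | act (a : Act)
  | test (φ : GLF L 𝒳 Act V)
  | choice (γ₁ γ₂ : GLG L 𝒳 Act V)
  | seq (γ₁ γ₂ : GLG L 𝒳 Act V)
  | star (γ : GLG L 𝒳 Act V)
  | dual (γ : GLG L 𝒳 Act V)
end

section GLDefs

variable {L : Language} {𝒳 Act V : Type*}

mutual
/-- Propositional variables occurring in a game-logic formula. -/
def GLF.pvars : GLF L 𝒳 Act V → Set V
  | .lit _ => ∅
  | .var X => {X}
  | .not φ => φ.pvars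
  | .or φ ψ => φ.pvars ∪ ψ.pvars
  | .dia γ φ => γ.pvars ∪ φ.pvars

/-- Propositional variables occurring in a game. -/
def GLG.pvars : GLG L 𝒳 Act V → Set V
  | .act _ => ∅
  | .test φ => φ.pvars
  | .choice γ₁ γ₂ => γ₁.pvars ∪ γ₂.pvars
  | .seq γ₁ γ₂ => γ₁.pvars ∪ γ₂.pvars
  | .star γ => γ.pvars
  | .dual γ => γ.pvars
end

mutual
/-- Transition symbols occurring in a game-logic formula. -/
def GLF.acts : GLF L 𝒳 Act V → Set Act
  | .lit _ => ∅
  | .var _ => ∅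
  | .not φ => φ.acts
  | .or φ ψ => φ.acts ∪ ψ.acts
  | .dia γ φ => γ.acts ∪ φ.acts

/-- Transition symbols occurring in a game. -/
def GLG.acts : GLG L 𝒳 Act V → Set Act
  | .act a => {a}
  | .test φ => φ.acts
  | .choice γ₁ γ₂ => γ₁.acts ∪ γ₂.acts
  | .seq γ₁ γ₂ => γ₁.acts ∪ γ₂.acts
  | .star γ => γ.acts
  | .dual γ => γ.acts
end

variable [DecidableEq V]

mutual
/-- Substitution of the game-logic formula `χ` for the propositional variable `X`
(everywhere, including inside tests of games). -/
def GLF.psub (X : V) (χ : GLF L 𝒳 Act V) : GLF L 𝒳 Act V → GLF L 𝒳 Act V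
  | .lit p => .lit p
  | .var Y => if Y = X then χ else .var Y
  | .not φ => .not (GLF.psub X χ φ)
  | .or φ ψ => .or (GLF.psub X χ φ) (GLF.psub X χ ψ)
  | .dia γ φ => .dia (GLG.psub X χ γ) (GLF.psub X χ φ)

def GLG.psub (X : V) (χ : GLF L 𝒳 Act V) : GLG L 𝒳 Act V → GLG L 𝒳 Act V
  | .act a => .act a
  | .test φ => .test (GLF.psub X χ φ)
  | .choice γ₁ γ₂ => .choice (GLG.psub X χ γ₁) (GLG.psub X χ γ₂)
  | .seq γ₁ γ₂ => .seq (GLG.psub X χ γ₁) (GLG.psub X χ γ₂)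
  | .star γ => .star (GLG.psub X χ γ)
  | .dual γ => .dual (GLG.psub X χ γ)
end

/-- Implication in game logic. -/
def GLF.gimp (φ ψ : GLF L 𝒳 Act V) : GLF L 𝒳 Act V := .or (.not φ) ψ

/-- Conjunction in game logic. -/
def GLF.gand (φ ψ : GLF L 𝒳 Act V) : GLF L 𝒳 Act V := .not (.or (.not φ) (.not ψ))

/-- Bi-implication in game logic. -/
def GLF.giff (φ ψ : GLF L 𝒳 Act V) : GLF L 𝒳 Act V := GLF.gand (GLF.gimp φ ψ) (GLF.gimp ψ φ)

end GLDefs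

/-! ## Semantics of first-order game logic -/

section GLSem

variable {L : Language} {𝒳 Act V : Type*} {M : Type*} [L.Structure M]
variable (tr : Act → (𝒳 → M) → (𝒳 → M) → Prop)

mutual
/-- Denotational semantics of game-logic formulas. -/
def GLF.sem : GLF L 𝒳 Act V → (V → Set (𝒳 → M)) → Set (𝒳 → M)
  | .lit p, _ => p.sem
  | .var X, Ω => Ω X
  | .not φ, Ω => (φ.sem Ω)ᶜ
  | .or φ ψ, Ω => φ.sem Ω ∪ ψ.sem Ω
  | .dia γ φ, Ω => γ.sem Ω (φ.sem Ω)

/-- Denotational semantics of games: `γ.sem tr Ω D` is the set of states from which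
Angel has a winning strategy in `γ` to reach `D`. -/
def GLG.sem : GLG L 𝒳 Act V → (V → Set (𝒳 → M)) → Set (𝒳 → M) → Set (𝒳 → M)
  | .act a, _, D => {ω | ∃ ν, tr a ω ν ∧ ν ∈ D}
  | .test φ, Ω, D => φ.sem Ω ∩ D
  | .choice γ₁ γ₂, Ω, D => γ₁.sem Ω D ∪ γ₂.sem Ω D
  | .seq γ₁ γ₂, Ω, D => γ₁.sem Ω (γ₂.sem Ω D)
  | .star γ, Ω, D => ⋂₀ {Z | D ∪ γ.sem Ω Z ⊆ Z}
  | .dual γ, Ω, D => (γ.sem Ω Dᶜ)ᶜ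
end

end GLSem


/-! ## The translation ♯ from game logic into the μ-calculus -/

section Sharp

variable {L : Language} {𝒳 Act V : Type*}

/-- The translation `♯` of `GL_𝒱`-formulas into `Lμ_𝒱`-formulas, as a relation
(the clause for `⟨γ*⟩φ` chooses a fresh propositional variable `X`). -/
inductive Sharp : GLF L 𝒳 Act V → MuF L 𝒳 Act V → Prop
  | lit (p) : Sharp (.lit p) (.lit p)
  | var (X) : Sharp (.var X) (.var (Sum.inl X))
  | not {φ m} : Sharp φ m → Sharp (.not φ) m.compl
  | or {φ₁ φ₂ m₁ m₂} : Sharp φ₁ m₁ → Sharp φ₂ m₂ → Sharp (.or φ₁ φ₂) (.or m₁ m₂)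
  | act {a φ m} : Sharp φ m → Sharp (.dia (.act a) φ) (.dia a m)
  | test {φ₁ φ₂ m₁ m₂} : Sharp φ₁ m₁ → Sharp φ₂ m₂ → Sharp (.dia (.test φ₁) φ₂) (.and m₁ m₂)
  | choice {γ₁ γ₂ φ m₁ m₂} : Sharp (.dia γ₁ φ) m₁ → Sharp (.dia γ₂ φ) m₂ →
      Sharp (.dia (.choice γ₁ γ₂) φ) (.or m₁ m₂)
  | seq {γ₁ γ₂ φ m} : Sharp (.dia γ₁ (.dia γ₂ φ)) m → Sharp (.dia (.seq γ₁ γ₂) φ) m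
  | dual {γ φ m} : Sharp (.dia γ (.not φ)) m → Sharp (.dia (.dual γ) φ) m.compl
  | star {γ φ X m} : X ∉ φ.pvars → X ∉ γ.pvars →
      Sharp (.or φ (.dia γ (.var X))) m →
      Sharp (.dia (.star γ) φ) (.mu (Sum.inl X) m)

end Sharp

/-! ## The translation of μ-calculus formulas into games (dictionaries) -/

section Flat

variable {L : Language} {𝒳 Act V : Type*} [DecidableEq V]

/-- A barred propositional variable as a game logic formula (`X̄` is `¬X`). -/
def gvar : V ⊕ V → GLF L 𝒳 Act V := Sum.elim .var (fun x => .not (.var x))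

/-- A canonical true game-logic formula `⊤`. -/
def glTrue (ℓ : 𝒳) : GLF L 𝒳 Act V := .lit (.eq (.var ℓ) (.var ℓ))

/-- A canonical false game-logic formula `⊥`. -/
def glFalse (ℓ : 𝒳) : GLF L 𝒳 Act V := .lit (.ne (.var ℓ) (.var ℓ))

/-- The dictionary `ϑ[X]`, treating `X` (and `X̄`) as bound. -/
def dictUp (ϑ : V → Bool) (X : V ⊕ V) : V → Bool := Function.update ϑ (unbar X) true

/-- A dictionary is compatible with a formula iff it takes value `0` on all
propositional variables bound in the formula. -/
def Compat (ϑ : V → Bool) (φ : MuF L 𝒳 Act V) : Prop :=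
  ∀ X ∈ φ.boundVars, ϑ (unbar X) = false

/-- Demonic choice `γ₁ ∩ γ₂`. -/
def GLG.dchoice (γ₁ γ₂ : GLG L 𝒳 Act V) : GLG L 𝒳 Act V := .dual (.choice (.dual γ₁) (.dual γ₂))

/-- Demonic repetition `γ^×`. -/
def GLG.cross (γ : GLG L 𝒳 Act V) : GLG L 𝒳 Act V := .dual (.star (.dual γ))

/-- The translation `φ^ϑ` of an `Lμ_𝒱`-formula into a `GL_𝒱`-game, relative to a
dictionary `ϑ`, a control variable `ℓ`, constant symbols `c_X`, and the deterministic
assignment transition symbols `asn`. -/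
def trGame (ℓ : 𝒳) (c : V ⊕ V → L.Constants) (asn : 𝒳 → L.Term 𝒳 → Act) :
    MuF L 𝒳 Act V → (V → Bool) → GLG L 𝒳 Act V
  | .lit p, _ => .seq (.test (.lit p)) (.dual (.test (glFalse ℓ)))
  | .var X, ϑ =>
      if ϑ (unbar X) then .act (asn ℓ (Language.Constants.term (c X)))
      else .seq (.test (gvar X)) (.dual (.test (glFalse ℓ)))
  | .or φ ψ, ϑ => .choice (trGame ℓ c asn φ ϑ) (trGame ℓ c asn ψ ϑ)
  | .and φ ψ, ϑ => GLG.dchoice (trGame ℓ c asn φ ϑ) (trGame ℓ c asn ψ ϑ)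
  | .dia a φ, ϑ => .seq (.act a) (trGame ℓ c asn φ ϑ)
  | .box a φ, ϑ => .seq (.dual (.act a)) (trGame ℓ c asn φ ϑ)
  | .mu X φ, ϑ => .seq (.act (asn ℓ (Language.Constants.term (c X))))
      (.seq (.star (.seq (.test (.lit (.eq (.var ℓ) (Language.Constants.term (c X)))))
                         (trGame ℓ c asn φ (dictUp ϑ X))))
            (.test (.lit (.ne (.var ℓ) (Language.Constants.term (c X))))))
  | .nu X φ, ϑ => .seq (.act (asn ℓ (Language.Constants.term (c X))))
      (.seq (GLG.cross (.seq (.dual (.test (.lit (.eq (.var ℓ) (Language.Constants.term (c X))))))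
                             (trGame ℓ c asn φ (dictUp ϑ X))))
            (.dual (.test (.lit (.ne (.var ℓ) (Language.Constants.term (c X)))))))

/-- The translation `ψ♭ = ⟨ψ^η⟩⊤` of an `Lμ`-formula into a `GL`-formula,
where `η` is the dictionary that is `0` everywhere. -/
def flatF (ℓ : 𝒳) (c : V ⊕ V → L.Constants) (asn : 𝒳 → L.Term 𝒳 → Act)
    (ψ : MuF L 𝒳 Act V) : GLF L 𝒳 Act V :=
  .dia (trGame ℓ c asn ψ (fun _ => false)) (glTrue ℓ)

/-- The object variables occurring (in literals) in a μ-calculus formula. -/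
def MuF.ovars : MuF L 𝒳 Act V → Set 𝒳
  | .lit p => p.ovars
  | .var _ => ∅
  | .or φ ψ => φ.ovars ∪ ψ.ovars
  | .and φ ψ => φ.ovars ∪ ψ.ovars
  | .dia _ φ => φ.ovars
  | .box _ φ => φ.ovars
  | .mu _ φ => φ.ovars
  | .nu _ φ => φ.ovars

variable {M : Type*} [DecidableEq 𝒳]

/-- Object variable `y` is independent of transition `a` under interpretation `tr`:
whenever `(ω,ν) ∈ ⟦a⟧` then also `(ω[b/y],ν[b/y]) ∈ ⟦a⟧`. -/
def IndepAct (tr : Act → (𝒳 → M) → (𝒳 → M) → Prop) (y : 𝒳) (a : Act) : Prop :=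
  ∀ (b : M) ω ν, tr a ω ν → tr a (Function.update ω y b) (Function.update ν y b)

/-- A valuation is independent of the object variable `y`. -/
def IndepVal (y : 𝒳) (Ω : V → Set (𝒳 → M)) : Prop :=
  ∀ (X : V) (b : M) (ω : 𝒳 → M), ω ∈ Ω X ↔ Function.update ω y b ∈ Ω X

end Flat

/-! ## Signatures with deterministic and nondeterministic assignments -/

/-- Transition symbols of a signature with deterministic and nondeterministic
assignments: base symbols from `A₀`, deterministic assignments `x := θ`, and
nondeterministic assignments `x := *`. -/
inductive CAct (L : Language) (𝒳 : Type u𝒳) (A₀ : Type uA) where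
  | base (a : A₀)
  | asn (x : 𝒳) (θ : L.Term 𝒳)
  | rand (x : 𝒳)

section CActDefs

variable {L : Language} {𝒳 A₀ : Type*} [DecidableEq 𝒳]

/-- Substitution of the term `θ` for the object variable `x` in a term. -/
def tsub (x : 𝒳) (θ : L.Term 𝒳) (t : L.Term 𝒳) : L.Term 𝒳 :=
  t.subst (fun y => if y = x then θ else .var y)

/-- Swapping the object variables `x` and `y` in a term. -/
def tswap (x y : 𝒳) (t : L.Term 𝒳) : L.Term 𝒳 := t.relabel (Equiv.swap x y)

/-- Substitution in literals. -/
def Lit.osub (x : 𝒳) (θ : L.Term 𝒳) : Lit L 𝒳 → Lit L 𝒳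
  | .eq t₁ t₂ => .eq (tsub x θ t₁) (tsub x θ t₂)
  | .ne t₁ t₂ => .ne (tsub x θ t₁) (tsub x θ t₂)
  | .rel R ts => .rel R (fun i => tsub x θ (ts i))
  | .nrel R ts => .nrel R (fun i => tsub x θ (ts i))

/-- Swapping object variables in literals. -/
def Lit.oswap (x y : 𝒳) : Lit L 𝒳 → Lit L 𝒳
  | .eq t₁ t₂ => .eq (tswap x y t₁) (tswap x y t₂)
  | .ne t₁ t₂ => .ne (tswap x y t₁) (tswap x y t₂)
  | .rel R ts => .rel R (fun i => tswap x y (ts i))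
  | .nrel R ts => .nrel R (fun i => tswap x y (ts i))

namespace CAct

/-- Whether the transition binds (assigns) the object variable `x`. -/
def bindsB (x : 𝒳) : CAct L 𝒳 A₀ → Bool
  | .base _ => false
  | .asn y _ => decide (y = x)
  | .rand y => decide (y = x)

/-- Substitution of `θ` for `x` in a transition symbol. -/
def osub (x : 𝒳) (θ : L.Term 𝒳) : CAct L 𝒳 A₀ → CAct L 𝒳 A₀
  | .base a => .base a
  | .asn y η => .asn y (tsub x θ η)
  | .rand y => .rand y

/-- Renaming `x ↔ y` in a transition symbol, using the signature's closure `sw`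
of base transition symbols under renaming. -/
def oswap (sw : 𝒳 → 𝒳 → A₀ → A₀) (x y : 𝒳) : CAct L 𝒳 A₀ → CAct L 𝒳 A₀
  | .base a => .base (sw x y a)
  | .asn z η => .asn (Equiv.swap x y z) (tswap x y η)
  | .rand z => .rand (Equiv.swap x y z)

/-- The object variables a transition symbol may depend on, given an interface
`fvB` for base transition symbols. -/
def ovarsF (fvB : A₀ → Set 𝒳) : CAct L 𝒳 A₀ → Set 𝒳
  | .base b => fvB b
  | .asn x θ => {x} ∪ tvars θ
  | .rand x => {x}

/-- The object variables bound (assigned) by a transition symbol. -/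
def obinds : CAct L 𝒳 A₀ → Set 𝒳
  | .base _ => ∅
  | .asn x _ => {x}
  | .rand x => {x}

/-- The base transition symbols of a transition symbol. -/
def bases : CAct L 𝒳 A₀ → Set A₀
  | .base a => {a}
  | .asn _ _ => ∅
  | .rand _ => ∅

end CAct

/-- Interpretation of transition symbols in an assignment and quantifier structure:
base symbols are interpreted by `trb`, deterministic assignments update the assigned
variable to the value of the term, nondeterministic assignments update it arbitrarily. -/
def ctrans {M : Type*} [L.Structure M] (trb : A₀ → (𝒳 → M) → (𝒳 → M) → Prop) :
    CAct L 𝒳 A₀ → (𝒳 → M) → (𝒳 → M) → Prop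
  | .base b => trb b
  | .asn x θ => fun ω ν => ν = Function.update ω x (θ.realize ω)
  | .rand x => fun ω ν => ∃ e : M, ν = Function.update ω x e

end CActDefs

/-! ## Syntactic operations on μ-calculus formulas over such signatures -/

section MuCalcOps

variable {L : Language} {𝒳 V A₀ : Type*} [DecidableEq 𝒳] [DecidableEq V]

namespace MuF

/-- Substitution `φ[θ/x]` of a term for an object variable. Base transition symbols
are unaffected; substitution stops under transitions binding `x`. -/
def osub (x : 𝒳) (θ : L.Term 𝒳) :
    MuF L 𝒳 (CAct L 𝒳 A₀) V → MuF L 𝒳 (CAct L 𝒳 A₀) V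
  | .lit p => .lit (p.osub x θ)
  | .var X => .var X
  | .or φ ψ => .or (osub x θ φ) (osub x θ ψ)
  | .and φ ψ => .and (osub x θ φ) (osub x θ ψ)
  | .dia a φ => .dia (a.osub x θ) (if a.bindsB x then φ else osub x θ φ)
  | .box a φ => .box (a.osub x θ) (if a.bindsB x then φ else osub x θ φ)
  | .mu X φ => .mu X (osub x θ φ)
  | .nu X φ => .nu X (osub x θ φ)

/-- Renaming `φₓʸ`, swapping the object variables `x` and `y` throughout. -/
def oswap (sw : 𝒳 → 𝒳 → A₀ → A₀) (x y : 𝒳) :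
    MuF L 𝒳 (CAct L 𝒳 A₀) V → MuF L 𝒳 (CAct L 𝒳 A₀) V
  | .lit p => .lit (p.oswap x y)
  | .var X => .var X
  | .or φ ψ => .or (oswap sw x y φ) (oswap sw x y ψ)
  | .and φ ψ => .and (oswap sw x y φ) (oswap sw x y ψ)
  | .dia a φ => .dia (a.oswap sw x y) (oswap sw x y φ)
  | .box a φ => .box (a.oswap sw x y) (oswap sw x y φ)
  | .mu X φ => .mu X (oswap sw x y φ)
  | .nu X φ => .nu X (oswap sw x y φ)

/-- The object variables a formula may depend on. -/
def ovarsF (fvB : A₀ → Set 𝒳) : MuF L 𝒳 (CAct L 𝒳 A₀) V → Set 𝒳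
  | .lit p => p.ovars
  | .var _ => ∅
  | .or φ ψ => ovarsF fvB φ ∪ ovarsF fvB ψ
  | .and φ ψ => ovarsF fvB φ ∪ ovarsF fvB ψ
  | .dia a φ => a.ovarsF fvB ∪ ovarsF fvB φ
  | .box a φ => a.ovarsF fvB ∪ ovarsF fvB φ
  | .mu _ φ => ovarsF fvB φ
  | .nu _ φ => ovarsF fvB φ

/-- The object variables bound by some transition occurring in the formula. -/
def obindsC : MuF L 𝒳 (CAct L 𝒳 A₀) V → Set 𝒳
  | .lit _ => ∅
  | .var _ => ∅
  | .or φ ψ => obindsC φ ∪ obindsC ψ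
  | .and φ ψ => obindsC φ ∪ obindsC ψ
  | .dia a φ => a.obinds ∪ obindsC φ
  | .box a φ => a.obinds ∪ obindsC φ
  | .mu _ φ => obindsC φ
  | .nu _ φ => obindsC φ

/-- The base transition symbols occurring in a formula. -/
def baseActs : MuF L 𝒳 (CAct L 𝒳 A₀) V → Set A₀
  | .lit _ => ∅
  | .var _ => ∅
  | .or φ ψ => baseActs φ ∪ baseActs ψ
  | .and φ ψ => baseActs φ ∪ baseActs ψ
  | .dia a φ => a.bases ∪ baseActs φ
  | .box a φ => a.bases ∪ baseActs φ
  | .mu _ φ => baseActs φ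
  | .nu _ φ => baseActs φ

end MuF

/-- Admissibility of the substitution `φ[θ/x]` for the axiom `∃I`. -/
def OAdm (fvB : A₀ → Set 𝒳) (x : 𝒳) (θ : L.Term 𝒳)
    (φ : MuF L 𝒳 (CAct L 𝒳 A₀) V) : Prop :=
  x ∉ φ.ovarsF fvB ∨
    (φ.baseActs = ∅ ∧ (∀ y ∈ tvars θ, y ∉ φ.obindsC) ∧ φ.freeVars = ∅)

end MuCalcOps

/-! ## Propositional tautologies and equality axioms for the μ-calculus -/

section MuAx

variable {L : Language} {𝒳 Act V : Type*} [DecidableEq V]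

namespace MuF

/-- Purely propositional formulas: built from propositional variables by `∨` and `∧`. -/
def PureProp : MuF L 𝒳 Act V → Prop
  | .var _ => True
  | .or φ ψ => PureProp φ ∧ PureProp ψ
  | .and φ ψ => PureProp φ ∧ PureProp ψ
  | _ => False

/-- Evaluation of a purely propositional formula under a Boolean assignment,
interpreting bars as negation. -/
def propEval (v : V → Prop) : MuF L 𝒳 Act V → Prop
  | .var (.inl X) => v X
  | .var (.inr X) => ¬ v X
  | .or φ ψ => propEval v φ ∨ propEval v ψ
  | .and φ ψ => propEval v φ ∧ propEval v ψ
  | _ => False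

end MuF

/-- Propositional tautologies: the smallest set of formulas closed under substitution
of propositional variables that contains all valid purely propositional formulas. -/
inductive MuTaut : MuF L 𝒳 Act V → Prop
  | base {φ : MuF L 𝒳 Act V} : φ.PureProp → (∀ v : V → Prop, φ.propEval v) → MuTaut φ
  | subst {φ : MuF L 𝒳 Act V} (X : V ⊕ V) (ψ : MuF L 𝒳 Act V) :
      MuTaut φ → MuTaut (MuF.subst X ψ φ)

/-- Iterated implication `φ₁ → (φ₂ → ⋯ → χ)`. -/
def impChain : List (MuF L 𝒳 Act V) → MuF L 𝒳 Act V → MuF L 𝒳 Act V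
  | [], χ => χ
  | φ :: t, χ => φ.imp (impChain t χ)

/-- The first-order equality axioms: equality is a congruence with respect to the
function and predicate symbols of the first-order signature. -/
inductive MuEqAx : MuF L 𝒳 Act V → Prop
  | refl (t : L.Term 𝒳) : MuEqAx (.lit (.eq t t))
  | symm (t₁ t₂ : L.Term 𝒳) : MuEqAx ((MuF.lit (.eq t₁ t₂)).imp (.lit (.eq t₂ t₁)))
  | trans (t₁ t₂ t₃ : L.Term 𝒳) :
      MuEqAx ((MuF.lit (.eq t₁ t₂)).imp ((MuF.lit (.eq t₂ t₃)).imp (.lit (.eq t₁ t₃))))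
  | congFun {n : ℕ} (f : L.Functions n) (ts ts' : Fin n → L.Term 𝒳) :
      MuEqAx (impChain ((List.finRange n).map fun i => MuF.lit (.eq (ts i) (ts' i)))
        (.lit (.eq (Language.Term.func f ts) (Language.Term.func f ts'))))
  | congRel {n : ℕ} (R : L.Relations n) (ts ts' : Fin n → L.Term 𝒳) :
      MuEqAx (impChain ((List.finRange n).map fun i => MuF.lit (.eq (ts i) (ts' i)))
        ((MuF.lit (.rel R ts)).imp (.lit (.rel R ts'))))

/-- Renaming of bound propositional variables (α-equivalence). -/
inductive AEq : MuF L 𝒳 Act V → MuF L 𝒳 Act V → Prop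
  | refl (φ) : AEq φ φ
  | symm {φ ψ} : AEq φ ψ → AEq ψ φ
  | trans {φ ψ χ} : AEq φ ψ → AEq ψ χ → AEq φ χ
  | or {φ₁ φ₂ ψ₁ ψ₂} : AEq φ₁ ψ₁ → AEq φ₂ ψ₂ → AEq (.or φ₁ φ₂) (.or ψ₁ ψ₂)
  | and {φ₁ φ₂ ψ₁ ψ₂} : AEq φ₁ ψ₁ → AEq φ₂ ψ₂ → AEq (.and φ₁ φ₂) (.and ψ₁ ψ₂)
  | dia (a) {φ ψ} : AEq φ ψ → AEq (.dia a φ) (.dia a ψ)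
  | box (a) {φ ψ} : AEq φ ψ → AEq (.box a φ) (.box a ψ)
  | mu (X) {φ ψ} : AEq φ ψ → AEq (.mu X φ) (.mu X ψ)
  | nu (X) {φ ψ} : AEq φ ψ → AEq (.nu X φ) (.nu X ψ)
  | muRename {X Y : V ⊕ V} {φ : MuF L 𝒳 Act V} : Y ∉ φ.mentions → bar Y ∉ φ.mentions →
      AEq (.mu X φ) (.mu Y (MuF.subst X (.var Y) φ))
  | nuRename {X Y : V ⊕ V} {φ : MuF L 𝒳 Act V} : Y ∉ φ.mentions → bar Y ∉ φ.mentions →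
      AEq (.nu X φ) (.nu Y (MuF.subst X (.var Y) φ))

end MuAx

/-! ## The Hilbert-style proof calculus for the first-order modal μ-calculus -/

section MuCalc

variable {L : Language} {𝒳 V A₀ : Type*} [DecidableEq 𝒳] [DecidableEq V]

/-- Provability in the `Lμ`-calculus from the theory `T`, by a derivation all of whose
formulas belong to `S`. The calculus has rules `MP`, `Mₐ` and `FPμ`, the axioms
`μ` (unfolding), `∃I`, `V`, `⟨:=⟩`, all propositional tautologies and equality axioms,
and permits renaming of bound propositional variables. -/
inductive MuPrvIn (sw : 𝒳 → 𝒳 → A₀ → A₀) (fvB : A₀ → Set 𝒳)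
    (S : Set (MuF L 𝒳 (CAct L 𝒳 A₀) V)) (T : Set (MuF L 𝒳 (CAct L 𝒳 A₀) V)) :
    MuF L 𝒳 (CAct L 𝒳 A₀) V → Prop
  | hyp {φ} : φ ∈ T → φ ∈ S → MuPrvIn sw fvB S T φ
  | taut {φ} : MuTaut φ → φ.WF → φ ∈ S → MuPrvIn sw fvB S T φ
  | eqax {φ} : MuEqAx φ → φ ∈ S → MuPrvIn sw fvB S T φ
  | mufix {X φ} : (MuF.mu X φ).WF → MuF.FreeFor X (.mu X φ) φ →
      (MuF.subst X (.mu X φ) φ).iff (.mu X φ) ∈ S →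
      MuPrvIn sw fvB S T ((MuF.subst X (.mu X φ) φ).iff (.mu X φ))
  | existsI {x θ φ} : φ.WF → OAdm fvB x θ φ →
      (φ.osub x θ).imp (.dia (.rand x) φ) ∈ S →
      MuPrvIn sw fvB S T ((φ.osub x θ).imp (.dia (.rand x) φ))
  | vac {x ψ} : ψ.WF → x ∉ ψ.ovarsF fvB → ψ.freeVars = ∅ →
      (MuF.dia (.rand x) ψ).imp ψ ∈ S →
      MuPrvIn sw fvB S T ((MuF.dia (.rand x) ψ).imp ψ)
  | asgn {x y : 𝒳} {θ : L.Term 𝒳} {φ} : φ.WF → y ≠ x → y ∉ tvars θ →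
      y ∉ φ.ovarsF fvB → φ.freeVars = ∅ →
      (MuF.dia (.asn x θ) φ).iff
        (.dia (.rand y) (.and (.lit (.eq (.var y) θ)) (φ.oswap sw x y))) ∈ S →
      MuPrvIn sw fvB S T ((MuF.dia (.asn x θ) φ).iff
        (.dia (.rand y) (.and (.lit (.eq (.var y) θ)) (φ.oswap sw x y))))
  | mp {φ ψ} : MuPrvIn sw fvB S T (ψ.imp φ) → MuPrvIn sw fvB S T ψ → φ ∈ S →
      MuPrvIn sw fvB S T φ
  | mono (a : CAct L 𝒳 A₀) {ψ φ} : MuPrvIn sw fvB S T (ψ.imp φ) →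
      (MuF.dia a ψ).imp (.dia a φ) ∈ S →
      MuPrvIn sw fvB S T ((MuF.dia a ψ).imp (.dia a φ))
  | fpmu {X ψ φ} : MuF.FreeFor X φ ψ → (MuF.mu X ψ).WF →
      MuPrvIn sw fvB S T ((MuF.subst X φ ψ).imp φ) → (MuF.mu X ψ).imp φ ∈ S →
      MuPrvIn sw fvB S T ((MuF.mu X ψ).imp φ)
  | alpha {φ ψ} : AEq φ ψ → MuPrvIn sw fvB S T φ → ψ ∈ S → MuPrvIn sw fvB S T ψ

/-- Provability `T ⊢_Lμ φ` in the `Lμ`-calculus. -/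
abbrev MuPrv (sw : 𝒳 → 𝒳 → A₀ → A₀) (fvB : A₀ → Set 𝒳)
    (T : Set (MuF L 𝒳 (CAct L 𝒳 A₀) V)) : MuF L 𝒳 (CAct L 𝒳 A₀) V → Prop :=
  MuPrvIn sw fvB Set.univ T

end MuCalc

/-! ## Syntactic operations on game logic formulas over assignment signatures -/

section GLCalcOps

variable {L : Language} {𝒳 V A₀ : Type*} [DecidableEq 𝒳] [DecidableEq V]

mutual
/-- Substitution `φ[θ/x]` of a term for an object variable in game logic formulas. -/
def GLF.osub (x : 𝒳) (θ : L.Term 𝒳) :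
    GLF L 𝒳 (CAct L 𝒳 A₀) V → GLF L 𝒳 (CAct L 𝒳 A₀) V
  | .lit p => .lit (p.osub x θ)
  | .var X => .var X
  | .not φ => .not (GLF.osub x θ φ)
  | .or φ ψ => .or (GLF.osub x θ φ) (GLF.osub x θ ψ)
  | .dia γ φ => .dia (GLG.osub x θ γ) (GLF.osub x θ φ)

/-- Substitution of a term for an object variable in games. -/
def GLG.osub (x : 𝒳) (θ : L.Term 𝒳) :
    GLG L 𝒳 (CAct L 𝒳 A₀) V → GLG L 𝒳 (CAct L 𝒳 A₀) V
  | .act a => .act (a.osub x θ)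
  | .test φ => .test (GLF.osub x θ φ)
  | .choice γ₁ γ₂ => .choice (GLG.osub x θ γ₁) (GLG.osub x θ γ₂)
  | .seq γ₁ γ₂ => .seq (GLG.osub x θ γ₁) (GLG.osub x θ γ₂)
  | .star γ => .star (GLG.osub x θ γ)
  | .dual γ => .dual (GLG.osub x θ γ)
end

mutual
/-- Renaming `φₓʸ`, swapping the object variables `x` and `y` throughout. -/
def GLF.oswap (sw : 𝒳 → 𝒳 → A₀ → A₀) (x y : 𝒳) :
    GLF L 𝒳 (CAct L 𝒳 A₀) V → GLF L 𝒳 (CAct L 𝒳 A₀) V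
  | .lit p => .lit (p.oswap x y)
  | .var X => .var X
  | .not φ => .not (GLF.oswap sw x y φ)
  | .or φ ψ => .or (GLF.oswap sw x y φ) (GLF.oswap sw x y ψ)
  | .dia γ φ => .dia (GLG.oswap sw x y γ) (GLF.oswap sw x y φ)

def GLG.oswap (sw : 𝒳 → 𝒳 → A₀ → A₀) (x y : 𝒳) :
    GLG L 𝒳 (CAct L 𝒳 A₀) V → GLG L 𝒳 (CAct L 𝒳 A₀) V
  | .act a => .act (a.oswap sw x y)
  | .test φ => .test (GLF.oswap sw x y φ)
  | .choice γ₁ γ₂ => .choice (GLG.oswap sw x y γ₁) (GLG.oswap sw x y γ₂)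
  | .seq γ₁ γ₂ => .seq (GLG.oswap sw x y γ₁) (GLG.oswap sw x y γ₂)
  | .star γ => .star (GLG.oswap sw x y γ)
  | .dual γ => .dual (GLG.oswap sw x y γ)
end

mutual
/-- Object variables a game logic formula may depend on. -/
def GLF.ovarsF (fvB : A₀ → Set 𝒳) : GLF L 𝒳 (CAct L 𝒳 A₀) V → Set 𝒳
  | .lit p => p.ovars
  | .var _ => ∅
  | .not φ => GLF.ovarsF fvB φ
  | .or φ ψ => GLF.ovarsF fvB φ ∪ GLF.ovarsF fvB ψ
  | .dia γ φ => GLG.ovarsF fvB γ ∪ GLF.ovarsF fvB φ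

def GLG.ovarsF (fvB : A₀ → Set 𝒳) : GLG L 𝒳 (CAct L 𝒳 A₀) V → Set 𝒳
  | .act a => a.ovarsF fvB
  | .test φ => GLF.ovarsF fvB φ
  | .choice γ₁ γ₂ => GLG.ovarsF fvB γ₁ ∪ GLG.ovarsF fvB γ₂
  | .seq γ₁ γ₂ => GLG.ovarsF fvB γ₁ ∪ GLG.ovarsF fvB γ₂
  | .star γ => GLG.ovarsF fvB γ
  | .dual γ => GLG.ovarsF fvB γ
end

mutual
/-- Object variables bound by a transition occurring in a formula. -/
def GLF.obindsC : GLF L 𝒳 (CAct L 𝒳 A₀) V → Set 𝒳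
  | .lit _ => ∅
  | .var _ => ∅
  | .not φ => GLF.obindsC φ
  | .or φ ψ => GLF.obindsC φ ∪ GLF.obindsC ψ
  | .dia γ φ => GLG.obindsC γ ∪ GLF.obindsC φ

def GLG.obindsC : GLG L 𝒳 (CAct L 𝒳 A₀) V → Set 𝒳
  | .act a => a.obinds
  | .test φ => GLF.obindsC φ
  | .choice γ₁ γ₂ => GLG.obindsC γ₁ ∪ GLG.obindsC γ₂
  | .seq γ₁ γ₂ => GLG.obindsC γ₁ ∪ GLG.obindsC γ₂
  | .star γ => GLG.obindsC γ
  | .dual γ => GLG.obindsC γ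
end

mutual
/-- The base transition symbols occurring in a formula. -/
def GLF.baseActs : GLF L 𝒳 (CAct L 𝒳 A₀) V → Set A₀
  | .lit _ => ∅
  | .var _ => ∅
  | .not φ => GLF.baseActs φ
  | .or φ ψ => GLF.baseActs φ ∪ GLF.baseActs ψ
  | .dia γ φ => GLG.baseActs γ ∪ GLF.baseActs φ

def GLG.baseActs : GLG L 𝒳 (CAct L 𝒳 A₀) V → Set A₀
  | .act a => a.bases
  | .test φ => GLF.baseActs φ
  | .choice γ₁ γ₂ => GLG.baseActs γ₁ ∪ GLG.baseActs γ₂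
  | .seq γ₁ γ₂ => GLG.baseActs γ₁ ∪ GLG.baseActs γ₂
  | .star γ => GLG.baseActs γ
  | .dual γ => GLG.baseActs γ
end

/-- Admissibility of the substitution `φ[θ/x]` in game logic. -/
def GOAdm (fvB : A₀ → Set 𝒳) (x : 𝒳) (θ : L.Term 𝒳)
    (φ : GLF L 𝒳 (CAct L 𝒳 A₀) V) : Prop :=
  x ∉ φ.ovarsF fvB ∨ (φ.baseActs = ∅ ∧ ∀ y ∈ tvars θ, y ∉ φ.obindsC)

end GLCalcOps

/-! ## Propositional tautologies and equality axioms for game logic -/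

section GLAx

variable {L : Language} {𝒳 Act V : Type*} [DecidableEq V]

/-- Purely propositional game logic formulas. -/
def GLF.pPure : GLF L 𝒳 Act V → Prop
  | .var _ => True
  | .not φ => GLF.pPure φ
  | .or φ ψ => GLF.pPure φ ∧ GLF.pPure ψ
  | _ => False

/-- Evaluation of propositional game logic formulas. -/
def GLF.pEval (v : V → Prop) : GLF L 𝒳 Act V → Prop
  | .var X => v X
  | .not φ => ¬ GLF.pEval v φ
  | .or φ ψ => GLF.pEval v φ ∨ GLF.pEval v ψ
  | _ => False

/-- Propositional tautologies of game logic: closure of the valid purely propositional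
formulas under substitution of propositional variables. -/
inductive GLTaut : GLF L 𝒳 Act V → Prop
  | base {φ : GLF L 𝒳 Act V} : φ.pPure → (∀ v : V → Prop, φ.pEval v) → GLTaut φ
  | subst {φ : GLF L 𝒳 Act V} (X : V) (ψ : GLF L 𝒳 Act V) : GLTaut φ → GLTaut (GLF.psub X ψ φ)

/-- Iterated implication in game logic. -/
def gimpChain : List (GLF L 𝒳 Act V) → GLF L 𝒳 Act V → GLF L 𝒳 Act V
  | [], χ => χ
  | φ :: t, χ => φ.gimp (gimpChain t χ)

/-- The first-order equality axioms for game logic. -/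
inductive GLEqAx : GLF L 𝒳 Act V → Prop
  | refl (t : L.Term 𝒳) : GLEqAx (.lit (.eq t t))
  | symm (t₁ t₂ : L.Term 𝒳) : GLEqAx ((GLF.lit (.eq t₁ t₂)).gimp (.lit (.eq t₂ t₁)))
  | trans (t₁ t₂ t₃ : L.Term 𝒳) :
      GLEqAx ((GLF.lit (.eq t₁ t₂)).gimp ((GLF.lit (.eq t₂ t₃)).gimp (.lit (.eq t₁ t₃))))
  | congFun {n : ℕ} (f : L.Functions n) (ts ts' : Fin n → L.Term 𝒳) :
      GLEqAx (gimpChain ((List.finRange n).map fun i => GLF.lit (.eq (ts i) (ts' i)))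
        (.lit (.eq (Language.Term.func f ts) (Language.Term.func f ts'))))
  | congRel {n : ℕ} (R : L.Relations n) (ts ts' : Fin n → L.Term 𝒳) :
      GLEqAx (gimpChain ((List.finRange n).map fun i => GLF.lit (.eq (ts i) (ts' i)))
        ((GLF.lit (.rel R ts)).gimp (.lit (.rel R ts'))))

end GLAx

/-! ## The Hilbert-style proof calculus for first-order game logic -/

section GLCalc

variable {L : Language} {𝒳 V A₀ : Type*} [DecidableEq 𝒳] [DecidableEq V]

/-- Provability `T ⊢_GL φ` in the `GL`-calculus (operating on `GL`-formulas, i.e.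
formulas without propositional variables), with rules `MP`, `M`, `FP*`, the game
axioms `⟨?⟩`, `⟨∪⟩`, `⟨;⟩`, `⟨*⟩`, `⟨ᵈ⟩`, the axioms `∃I`, `V`, `⟨:=⟩`, and all
propositional tautologies and equality axioms. -/
inductive GLPrv (sw : 𝒳 → 𝒳 → A₀ → A₀) (fvB : A₀ → Set 𝒳)
    (T : Set (GLF L 𝒳 (CAct L 𝒳 A₀) V)) : GLF L 𝒳 (CAct L 𝒳 A₀) V → Prop
  | hyp {φ} : φ ∈ T → GLPrv sw fvB T φ
  | taut {φ} : GLTaut φ → φ.pvars = ∅ → GLPrv sw fvB T φ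
  | eqax {φ} : GLEqAx φ → GLPrv sw fvB T φ
  | existsI {x θ φ} : φ.pvars = ∅ → GOAdm fvB x θ φ →
      GLPrv sw fvB T ((φ.osub x θ).gimp (.dia (.act (.rand x)) φ))
  | vac {x ψ} : ψ.pvars = ∅ → x ∉ ψ.ovarsF fvB →
      GLPrv sw fvB T ((GLF.dia (.act (.rand x)) ψ).gimp ψ)
  | asgn {x y : 𝒳} {θ : L.Term 𝒳} {φ} : φ.pvars = ∅ → y ≠ x → y ∉ tvars θ →
      y ∉ φ.ovarsF fvB →
      GLPrv sw fvB T ((GLF.dia (.act (.asn x θ)) φ).giff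
        (.dia (.act (.rand y)) ((GLF.lit (.eq (.var y) θ)).gand (φ.oswap sw x y))))
  | testAx {ψ φ} : ψ.pvars = ∅ → φ.pvars = ∅ →
      GLPrv sw fvB T ((GLF.dia (.test ψ) φ).giff (ψ.gand φ))
  | choiceAx {γ₁ γ₂ φ} : γ₁.pvars = ∅ → γ₂.pvars = ∅ → φ.pvars = ∅ →
      GLPrv sw fvB T ((GLF.dia (.choice γ₁ γ₂) φ).giff (.or (.dia γ₁ φ) (.dia γ₂ φ)))
  | seqAx {γ₁ γ₂ φ} : γ₁.pvars = ∅ → γ₂.pvars = ∅ → φ.pvars = ∅ →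
      GLPrv sw fvB T ((GLF.dia (.seq γ₁ γ₂) φ).giff (.dia γ₁ (.dia γ₂ φ)))
  | starAx {γ φ} : γ.pvars = ∅ → φ.pvars = ∅ →
      GLPrv sw fvB T ((GLF.dia (.star γ) φ).giff (.or φ (.dia γ (.dia (.star γ) φ))))
  | dualAx {γ φ} : γ.pvars = ∅ → φ.pvars = ∅ →
      GLPrv sw fvB T ((GLF.dia (.dual γ) φ).giff (.not (.dia γ (.not φ))))
  | mp {φ ψ} : GLPrv sw fvB T (ψ.gimp φ) → GLPrv sw fvB T ψ → GLPrv sw fvB T φ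
  | mono (γ : GLG L 𝒳 (CAct L 𝒳 A₀) V) {ψ φ} : γ.pvars = ∅ →
      GLPrv sw fvB T (ψ.gimp φ) →
      GLPrv sw fvB T ((GLF.dia γ ψ).gimp (.dia γ φ))
  | fp {γ ψ φ} : γ.pvars = ∅ →
      GLPrv sw fvB T ((GLF.or ψ (.dia γ φ)).gimp φ) →
      GLPrv sw fvB T ((GLF.dia (.star γ) ψ).gimp φ)

end GLCalc

/-!
Part (1) is an induction along `♯`: complementation is semantic complement (de Morgan duality
exchanges least and greatest fixed points), and `⟨γ*⟩φ` denotes the least fixed point of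
`Z ↦ φ ∪ ⟨γ⟩Z`, which is what `μX.(φ ∨ ⟨γ⟩X)♯` denotes.

For part (2), the value `c_X` of the control variable `ℓ` stands for the fixpoint variable `X`:
the game `X^ϑ` sets `ℓ := c_X`, so a winning region `Z` of the loop body of `(μX.φ)^ϑ` stores
the approximant `{ω | ω[c_X/ℓ] ∈ Z}` of `X`. As `ℓ` occurs neither in `ψ` nor in its transitions,
all denotations are independent of `ℓ`, and the rolling rule `e (lfp (g ∘ e)) = lfp (e ∘ g)`
turns the fixed point of the loop into the fixed point of the formula.
-/

section Fixpoints

open OrderHom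

variable {α : Type*} [CompleteLattice α]

/-- Fixed point fusion: `e` writes into the part of `α` that `p` reads, and `g` after writing
acts as `f` after reading. -/
theorem map_lfp_comp_eq_lfp {p e f g : α →o α} (hpe : ∀ a, p (e a) = p a)
    (hge : ∀ a, g (e a) = f (p a)) (hpf : ∀ a, p (f (p a)) = f (p a))
    (hfix : p f.lfp = f.lfp) : p (e.comp g).lfp = f.lfp := by
  have hroll : p (e.comp g).lfp = (p.comp f).lfp := by
    rw [← map_lfp_comp, hpe, show g.comp e = f.comp p from OrderHom.ext _ _ (funext hge),
      map_lfp_comp]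
  rw [hroll]
  refine le_antisymm (lfp_le _ (by simp [hfix])) (lfp_le _ (le_of_eq ?_))
  set P := (p.comp f).lfp
  have hP : p (f P) = P := map_lfp (p.comp f)
  calc f P = f (p (f P)) := by rw [hP]
    _ = p (f (p (f P))) := (hpf _).symm
    _ = P := by rw [hP, hP]

theorem map_gfp_comp_eq_gfp {p e f g : α →o α} (hpe : ∀ a, p (e a) = p a)
    (hge : ∀ a, g (e a) = f (p a)) (hpf : ∀ a, p (f (p a)) = f (p a))
    (hfix : p f.gfp = f.gfp) : p (e.comp g).gfp = f.gfp :=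
  map_lfp_comp_eq_lfp (α := αᵒᵈ) (p := p.dual) (e := e.dual) (f := f.dual) (g := g.dual)
    hpe hge hpf hfix

end Fixpoints

section SetFixpoints

variable {α : Type*} (F : Set α → Set α)

lemma compl_sInter_prefixed : (⋂₀ {Z | F Z ⊆ Z})ᶜ = ⋃₀ {Z | Z ⊆ (F Zᶜ)ᶜ} := by
  rw [Set.compl_sInter, Set.compl_image_ofPred]
  congr 1
  ext Z
  exact Set.subset_compl_comm

lemma compl_sUnion_postfixed : (⋃₀ {Z | Z ⊆ F Z})ᶜ = ⋂₀ {Z | (F Zᶜ)ᶜ ⊆ Z} := by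
  rw [Set.compl_sUnion, Set.compl_image_ofPred]
  congr 1
  ext Z
  exact Set.compl_subset_comm

end SetFixpoints

section Valuations

variable {𝒳 V M : Type*}

lemma unbar_ne_unbar_iff {X Y : V ⊕ V} : unbar Y ≠ unbar X ↔ Y ≠ X ∧ Y ≠ bar X := by
  cases X <;> cases Y <;> simp [unbar, bar]

lemma barVal_bar (Ω : V → Set (𝒳 → M)) (X : V ⊕ V) : barVal Ω (bar X) = (barVal Ω X)ᶜ := by
  cases X <;> simp [barVal, bar]

variable [DecidableEq V]

lemma modif_bar (Ω : V → Set (𝒳 → M)) (X : V ⊕ V) (E : Set (𝒳 → M)) :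
    modif Ω (bar X) E = modif Ω X Eᶜ := by
  cases X <;> simp [modif, bar]

@[simp]
lemma barVal_modif_self (Ω : V → Set (𝒳 → M)) (X : V ⊕ V) (E : Set (𝒳 → M)) :
    barVal (modif Ω X E) X = E := by
  cases X <;> simp [barVal, modif]

lemma barVal_modif_of_unbar_ne (Ω : V → Set (𝒳 → M)) {X Y : V ⊕ V} (h : unbar Y ≠ unbar X)
    (E : Set (𝒳 → M)) : barVal (modif Ω X E) Y = barVal Ω Y := by
  cases X <;> cases Y <;> simp_all [unbar, barVal, modif]

lemma modif_modif_of_unbar_eq (Ω : V → Set (𝒳 → M)) {X Z : V ⊕ V} (h : unbar Z = unbar X)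
    (E D : Set (𝒳 → M)) : modif (modif Ω X E) Z D = modif Ω Z D := by
  cases X <;> cases Z <;> simp_all [unbar, modif]

lemma modif_comm (Ω : V → Set (𝒳 → M)) {X Z : V ⊕ V} (h : unbar Z ≠ unbar X)
    (E D : Set (𝒳 → M)) : modif (modif Ω X E) Z D = modif (modif Ω Z D) X E := by
  cases X <;> cases Z <;> simp only [unbar, Sum.elim_inl, Sum.elim_inr, id] at h <;>
    simp only [modif] <;> exact Function.update_comm (Ne.symm h) _ _ _

end Valuations

section FreeVars

variable {L : Language} {𝒳 Act V : Type*}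

lemma freeVars_subset_mentions : ∀ φ : MuF L 𝒳 Act V, φ.freeVars ⊆ φ.mentions
  | .lit _ | .var _ => subset_rfl
  | .or φ ψ | .and φ ψ =>
      Set.union_subset_union (freeVars_subset_mentions φ) (freeVars_subset_mentions ψ)
  | .dia _ φ | .box _ φ => freeVars_subset_mentions φ
  | .mu _ φ | .nu _ φ =>
      Set.sdiff_subset.trans ((freeVars_subset_mentions φ).trans Set.subset_union_right)

lemma eq_or_mem_freeVars_sdiff {φ : MuF L 𝒳 Act V} {X Y : V ⊕ V} (hX : bar X ∉ φ.mentions)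
    (hY : Y ∈ φ.freeVars) : Y = X ∨ (Y ∈ φ.freeVars \ {X, bar X} ∧ unbar Y ≠ unbar X) := by
  have hYX : Y ≠ bar X := fun h => hX (h ▸ freeVars_subset_mentions φ hY)
  by_cases h : Y = X
  · exact .inl h
  · exact .inr ⟨⟨hY, by simp [h, hYX]⟩, unbar_ne_unbar_iff.2 ⟨h, hYX⟩⟩

end FreeVars

section Independence

variable {L : Language} {𝒳 Act M : Type*} [DecidableEq 𝒳]

def StateIndep (ℓ : 𝒳) (S : Set (𝒳 → M)) : Prop :=
  ∀ (b : M) (ω : 𝒳 → M), Function.update ω ℓ b ∈ S ↔ ω ∈ S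

namespace StateIndep

variable {ℓ : 𝒳} {S T : Set (𝒳 → M)}

lemma preimage_eq (h : StateIndep ℓ S) (b : M) : (Function.update · ℓ b) ⁻¹' S = S :=
  Set.ext (h b)

lemma compl (h : StateIndep ℓ S) : StateIndep ℓ Sᶜ := fun b ω => not_congr (h b ω)

lemma union (hS : StateIndep ℓ S) (hT : StateIndep ℓ T) : StateIndep ℓ (S ∪ T) :=
  fun b ω => or_congr (hS b ω) (hT b ω)

lemma inter (hS : StateIndep ℓ S) (hT : StateIndep ℓ T) : StateIndep ℓ (S ∩ T) :=
  fun b ω => and_congr (hS b ω) (hT b ω)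

lemma sUnion {s : Set (Set (𝒳 → M))} (h : ∀ S ∈ s, StateIndep ℓ S) : StateIndep ℓ (⋃₀ s) :=
  fun b ω => exists_congr fun S => and_congr_right fun hS => h S hS b ω

lemma sInter {s : Set (Set (𝒳 → M))} (h : ∀ S ∈ s, StateIndep ℓ S) : StateIndep ℓ (⋂₀ s) :=
  fun b ω => forall_congr' fun S => imp_congr_right fun hS => h S hS b ω

end StateIndep

lemma stateIndep_preimage_update (ℓ : 𝒳) (k : M) (Z : Set (𝒳 → M)) :
    StateIndep ℓ ((Function.update · ℓ k) ⁻¹' Z) := fun b ω => by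
  simp [Function.update_idem]

lemma stateIndep_of_preimage_eq {ℓ : 𝒳} {k : M} {D S : Set (𝒳 → M)}
    (h : (Function.update · ℓ k) ⁻¹' D = S) : StateIndep ℓ S :=
  h ▸ stateIndep_preimage_update ℓ k D

variable [L.Structure M]

lemma realize_update_of_notMem_tvars {ℓ : 𝒳} {b : M} :
    ∀ {t : L.Term 𝒳}, ℓ ∉ tvars t → ∀ ω : 𝒳 → M,
      t.realize (Function.update ω ℓ b) = t.realize ω
  | .var y, h, ω => Function.update_of_ne (by simpa [tvars, eq_comm] using h) _ _
  | .func f ts, h, ω => by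
      simp only [tvars, Set.mem_iUnion, not_exists] at h
      simp only [Language.Term.realize_func, realize_update_of_notMem_tvars (h _)]

lemma stateIndep_lit_sem {ℓ : 𝒳} {p : Lit L 𝒳} (h : ℓ ∉ p.ovars) :
    StateIndep ℓ (p.sem (M := M)) := by
  intro b ω
  cases p <;> simp only [Lit.ovars, Set.mem_union, Set.mem_iUnion, not_or, not_exists] at h <;>
    simp [Lit.sem, realize_update_of_notMem_tvars, h]

variable {tr : Act → (𝒳 → M) → (𝒳 → M) → Prop} {ℓ : 𝒳} {a : Act} {S : Set (𝒳 → M)}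

lemma stateIndep_dia (ha : IndepAct tr ℓ a) (hS : StateIndep ℓ S) :
    StateIndep ℓ {ω | ∃ ν, tr a ω ν ∧ ν ∈ S} := by
  intro b ω
  constructor
  · rintro ⟨ν, hων, hν⟩
    refine ⟨Function.update ν ℓ (ω ℓ), ?_, (hS _ ν).2 hν⟩
    simpa using ha (ω ℓ) _ _ hων
  · rintro ⟨ν, hων, hν⟩
    exact ⟨_, ha b ω ν hων, (hS b ν).2 hν⟩

lemma stateIndep_box (ha : IndepAct tr ℓ a) (hS : StateIndep ℓ S) :
    StateIndep ℓ {ω | ∀ ν, tr a ω ν → ν ∈ S} := by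
  convert (stateIndep_dia ha hS.compl).compl using 1
  ext ω
  simp

end Independence

section MuSemantics

variable {L : Language} {𝒳 Act V M : Type*} [L.Structure M] [DecidableEq V]
variable (tr : Act → (𝒳 → M) → (𝒳 → M) → Prop)

theorem MuF.sem_modif_mono : ∀ (φ : MuF L 𝒳 Act V) {X : V ⊕ V}, bar X ∉ φ.mentions →
    ∀ (Ω : V → Set (𝒳 → M)), Monotone fun E => φ.sem tr (modif Ω X E)
  | .lit _, _, _, _, _, _, _ => le_rfl
  | .var Y, X, hX, Ω, E, E', h => by
      by_cases hYX : Y = X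
      · subst hYX
        simpa [MuF.sem] using h
      · have hne : unbar Y ≠ unbar X :=
          unbar_ne_unbar_iff.2 ⟨hYX, fun hY => hX (by simp [MuF.mentions, hY])⟩
        simp only [MuF.sem, barVal_modif_of_unbar_ne _ hne, le_rfl]
  | .or φ ψ, X, hX, Ω, E, E', h => by
      simp only [MuF.mentions, Set.mem_union, not_or] at hX
      exact Set.union_subset_union (φ.sem_modif_mono hX.1 Ω h) (ψ.sem_modif_mono hX.2 Ω h)
  | .and φ ψ, X, hX, Ω, E, E', h => by
      simp only [MuF.mentions, Set.mem_union, not_or] at hX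
      exact Set.inter_subset_inter (φ.sem_modif_mono hX.1 Ω h) (ψ.sem_modif_mono hX.2 Ω h)
  | .dia _ φ, X, hX, Ω, E, E', h => fun _ ⟨ν, hων, hν⟩ => ⟨ν, hων, φ.sem_modif_mono hX Ω h hν⟩
  | .box _ φ, X, hX, Ω, E, E', h => fun _ hω ν hων => φ.sem_modif_mono hX Ω h (hω ν hων)
  | .mu Z φ, X, hX, Ω, E, E', h => by
      simp only [MuF.mentions, Set.mem_union, not_or] at hX
      by_cases hZX : unbar Z = unbar X
      · simp only [MuF.sem, modif_modif_of_unbar_eq _ hZX, le_rfl]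
      · refine Set.sInter_subset_sInter fun D hD => ?_
        simp only [Set.mem_ofPred_eq, modif_comm _ hZX] at hD ⊢
        exact (φ.sem_modif_mono hX.2 (modif Ω Z D) h).trans hD
  | .nu Z φ, X, hX, Ω, E, E', h => by
      simp only [MuF.mentions, Set.mem_union, not_or] at hX
      by_cases hZX : unbar Z = unbar X
      · simp only [MuF.sem, modif_modif_of_unbar_eq _ hZX, le_rfl]
      · refine Set.sUnion_subset_sUnion fun D hD => ?_
        simp only [Set.mem_ofPred_eq, modif_comm _ hZX] at hD ⊢
        exact hD.trans (φ.sem_modif_mono hX.2 (modif Ω Z D) h)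

def MuF.approx (φ : MuF L 𝒳 Act V) {X : V ⊕ V} (hX : bar X ∉ φ.mentions)
    (Ω : V → Set (𝒳 → M)) : Set (𝒳 → M) →o Set (𝒳 → M) :=
  ⟨fun E => φ.sem tr (modif Ω X E), φ.sem_modif_mono tr hX Ω⟩

lemma MuF.sem_mu {φ : MuF L 𝒳 Act V} {X : V ⊕ V} (hX : bar X ∉ φ.mentions)
    (Ω : V → Set (𝒳 → M)) : (MuF.mu X φ).sem tr Ω = (φ.approx tr hX Ω).lfp := rfl

lemma MuF.sem_nu {φ : MuF L 𝒳 Act V} {X : V ⊕ V} (hX : bar X ∉ φ.mentions)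
    (Ω : V → Set (𝒳 → M)) : (MuF.nu X φ).sem tr Ω = (φ.approx tr hX Ω).gfp := rfl

theorem MuF.sem_compl : ∀ (φ : MuF L 𝒳 Act V) (Ω : V → Set (𝒳 → M)),
    φ.compl.sem tr Ω = (φ.sem tr Ω)ᶜ
  | .lit p, Ω => by ext; cases p <;> simp [MuF.compl, MuF.sem, Lit.neg, Lit.sem]
  | .var X, Ω => barVal_bar Ω X
  | .or φ ψ, Ω => by simp [MuF.compl, MuF.sem, φ.sem_compl, ψ.sem_compl, Set.compl_union]
  | .and φ ψ, Ω => by simp [MuF.compl, MuF.sem, φ.sem_compl, ψ.sem_compl, Set.compl_inter]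
  | .dia _ φ, Ω => by ext; simp [MuF.compl, MuF.sem, φ.sem_compl]
  | .box _ φ, Ω => by ext; simp [MuF.compl, MuF.sem, φ.sem_compl]
  | .mu X φ, Ω => by
      simp only [MuF.compl, MuF.sem, modif_bar, φ.sem_compl]
      exact (compl_sInter_prefixed fun E => φ.sem tr (modif Ω X E)).symm
  | .nu X φ, Ω => by
      simp only [MuF.compl, MuF.sem, modif_bar, φ.sem_compl]
      exact (compl_sUnion_postfixed fun E => φ.sem tr (modif Ω X E)).symm

end MuSemantics

section Admissible

variable {L : Language} {𝒳 Act V M : Type*} [DecidableEq 𝒳]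
variable (tr : Act → (𝒳 → M) → (𝒳 → M) → Prop) (ℓ : 𝒳)

def Admissible (φ : MuF L 𝒳 Act V) : Prop :=
  φ.WF ∧ ℓ ∉ φ.ovars ∧ ∀ a ∈ φ.acts, IndepAct tr ℓ a

variable {tr ℓ} {φ ψ : MuF L 𝒳 Act V} {a : Act} {X : V ⊕ V}

lemma admissible_lit {p : Lit L 𝒳} : Admissible tr ℓ (.lit p : MuF L 𝒳 Act V) ↔ ℓ ∉ p.ovars := by
  simp [Admissible, MuF.WF, MuF.ovars, MuF.acts]

lemma admissible_or : Admissible tr ℓ (.or φ ψ) ↔ Admissible tr ℓ φ ∧ Admissible tr ℓ ψ := by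
  simp only [Admissible, MuF.WF, MuF.ovars, MuF.acts, Set.mem_union, or_imp, forall_and]
  tauto

lemma admissible_and : Admissible tr ℓ (.and φ ψ) ↔ Admissible tr ℓ φ ∧ Admissible tr ℓ ψ := by
  simp only [Admissible, MuF.WF, MuF.ovars, MuF.acts, Set.mem_union, or_imp, forall_and]
  tauto

lemma admissible_dia : Admissible tr ℓ (.dia a φ) ↔ IndepAct tr ℓ a ∧ Admissible tr ℓ φ := by
  simp only [Admissible, MuF.WF, MuF.ovars, MuF.acts, Set.mem_union, Set.mem_singleton_iff,
    or_imp, forall_and, forall_eq]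
  tauto

lemma admissible_box : Admissible tr ℓ (.box a φ) ↔ IndepAct tr ℓ a ∧ Admissible tr ℓ φ := by
  simp only [Admissible, MuF.WF, MuF.ovars, MuF.acts, Set.mem_union, Set.mem_singleton_iff,
    or_imp, forall_and, forall_eq]
  tauto

lemma admissible_mu : Admissible tr ℓ (.mu X φ) ↔ bar X ∉ φ.mentions ∧ Admissible tr ℓ φ := by
  simp only [Admissible, MuF.WF, MuF.ovars, MuF.acts]
  tauto

lemma admissible_nu : Admissible tr ℓ (.nu X φ) ↔ bar X ∉ φ.mentions ∧ Admissible tr ℓ φ := by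
  simp only [Admissible, MuF.WF, MuF.ovars, MuF.acts]
  tauto

end Admissible

section IndepSemantics

variable {L : Language} {𝒳 Act V M : Type*} [DecidableEq 𝒳] [DecidableEq V] {ℓ : 𝒳}

lemma stateIndep_barVal_modif {φ : MuF L 𝒳 Act V} {X : V ⊕ V} (hX : bar X ∉ φ.mentions)
    {Ω : V → Set (𝒳 → M)} (hΩ : ∀ Y ∈ φ.freeVars \ {X, bar X}, StateIndep ℓ (barVal Ω Y))
    {E : Set (𝒳 → M)} (hE : StateIndep ℓ E) :
    ∀ Y ∈ φ.freeVars, StateIndep ℓ (barVal (modif Ω X E) Y) := fun Y hY => by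
  rcases eq_or_mem_freeVars_sdiff hX hY with rfl | ⟨hY', hne⟩
  · simpa using hE
  · simpa [barVal_modif_of_unbar_ne _ hne] using hΩ Y hY'

variable [L.Structure M] {tr : Act → (𝒳 → M) → (𝒳 → M) → Prop}

theorem MuF.stateIndep_sem : ∀ {φ : MuF L 𝒳 Act V}, Admissible tr ℓ φ →
    ∀ {Ω : V → Set (𝒳 → M)}, (∀ Y ∈ φ.freeVars, StateIndep ℓ (barVal Ω Y)) →
      StateIndep ℓ (φ.sem tr Ω)
  | .lit _, h, _, _ => stateIndep_lit_sem (admissible_lit.1 h)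
  | .var X, _, _, hΩ => hΩ X rfl
  | .or _ _, h, _, hΩ =>
      (stateIndep_sem (admissible_or.1 h).1 fun Y hY => hΩ Y (.inl hY)).union
        (stateIndep_sem (admissible_or.1 h).2 fun Y hY => hΩ Y (.inr hY))
  | .and _ _, h, _, hΩ =>
      (stateIndep_sem (admissible_and.1 h).1 fun Y hY => hΩ Y (.inl hY)).inter
        (stateIndep_sem (admissible_and.1 h).2 fun Y hY => hΩ Y (.inr hY))
  | .dia _ _, h, _, hΩ =>
      stateIndep_dia (admissible_dia.1 h).1 (stateIndep_sem (admissible_dia.1 h).2 hΩ)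
  | .box _ _, h, _, hΩ =>
      stateIndep_box (admissible_box.1 h).1 (stateIndep_sem (admissible_box.1 h).2 hΩ)
  | .mu _ _, h, _, hΩ => by
      obtain ⟨hX, hφ⟩ := admissible_mu.1 h
      rw [MuF.sem_mu tr hX]
      exact OrderHom.lfp_induction _
        (fun E hE _ => stateIndep_sem hφ (stateIndep_barVal_modif hX hΩ hE))
        (fun _ => StateIndep.sUnion)
  | .nu _ _, h, _, hΩ => by
      obtain ⟨hX, hφ⟩ := admissible_nu.1 h
      rw [MuF.sem_nu tr hX]
      exact OrderHom.gfp_induction _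
        (fun E hE _ => stateIndep_sem hφ (stateIndep_barVal_modif hX hΩ hE))
        (fun _ => StateIndep.sInter)

end IndepSemantics

section GLSemantics

variable {L : Language} {𝒳 Act V M : Type*} [L.Structure M]
variable (tr : Act → (𝒳 → M) → (𝒳 → M) → Prop)

theorem GLG.sem_mono : ∀ (γ : GLG L 𝒳 Act V) (Ω : V → Set (𝒳 → M)), Monotone (γ.sem tr Ω)
  | .act _, _, _, _, h => fun _ ⟨ν, hων, hν⟩ => ⟨ν, hων, h hν⟩
  | .test _, _, _, _, h => Set.inter_subset_inter_right _ h
  | .choice γ₁ γ₂, Ω, _, _, h => Set.union_subset_union (γ₁.sem_mono Ω h) (γ₂.sem_mono Ω h)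
  | .seq γ₁ γ₂, Ω, _, _, h => γ₁.sem_mono Ω (γ₂.sem_mono Ω h)
  | .star _, _, _, _, h =>
      Set.sInter_subset_sInter fun _ hZ => (Set.union_subset_union_left _ h).trans hZ
  | .dual γ, Ω, _, _, h => Set.compl_subset_compl.2 (γ.sem_mono Ω (Set.compl_subset_compl.2 h))

def GLG.semHom (γ : GLG L 𝒳 Act V) (Ω : V → Set (𝒳 → M)) : Set (𝒳 → M) →o Set (𝒳 → M) :=
  ⟨γ.sem tr Ω, γ.sem_mono tr Ω⟩

lemma GLG.sem_cross (γ : GLG L 𝒳 Act V) (Ω : V → Set (𝒳 → M)) (D : Set (𝒳 → M)) :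
    γ.cross.sem tr Ω D = ⋃₀ {Z | Z ⊆ D ∩ γ.sem tr Ω Z} := by
  simp only [GLG.cross, GLG.sem, compl_sInter_prefixed, Set.compl_union, compl_compl]

variable [DecidableEq V]

mutual

theorem GLF.sem_update_of_notMem_pvars : ∀ (φ : GLF L 𝒳 Act V) {X : V}, X ∉ φ.pvars →
    ∀ (Ω : V → Set (𝒳 → M)) (E : Set (𝒳 → M)), φ.sem tr (Function.update Ω X E) = φ.sem tr Ω
  | .lit _, _, _, _, _ => rfl
  | .var Y, X, hX, Ω, E => by
      simp only [GLF.pvars, Set.mem_singleton_iff] at hX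
      simp only [GLF.sem, Function.update_of_ne (Ne.symm hX)]
  | .not φ, X, hX, Ω, E => by
      simp only [GLF.sem, φ.sem_update_of_notMem_pvars hX]
  | .or φ ψ, X, hX, Ω, E => by
      simp only [GLF.pvars, Set.mem_union, not_or] at hX
      simp only [GLF.sem, φ.sem_update_of_notMem_pvars hX.1, ψ.sem_update_of_notMem_pvars hX.2]
  | .dia γ φ, X, hX, Ω, E => by
      simp only [GLF.pvars, Set.mem_union, not_or] at hX
      simp only [GLF.sem, φ.sem_update_of_notMem_pvars hX.2, γ.sem_update_of_notMem_pvars hX.1]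

theorem GLG.sem_update_of_notMem_pvars : ∀ (γ : GLG L 𝒳 Act V) {X : V}, X ∉ γ.pvars →
    ∀ (Ω : V → Set (𝒳 → M)) (E : Set (𝒳 → M)),
      γ.sem tr (Function.update Ω X E) = γ.sem tr Ω
  | .act _, _, _, _, _ => rfl
  | .test φ, X, hX, Ω, E => by
      ext D : 1
      simp only [GLG.sem, φ.sem_update_of_notMem_pvars hX]
  | .choice γ₁ γ₂, X, hX, Ω, E => by
      simp only [GLG.pvars, Set.mem_union, not_or] at hX
      ext D : 1
      simp only [GLG.sem, γ₁.sem_update_of_notMem_pvars hX.1, γ₂.sem_update_of_notMem_pvars hX.2]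
  | .seq γ₁ γ₂, X, hX, Ω, E => by
      simp only [GLG.pvars, Set.mem_union, not_or] at hX
      ext D : 1
      simp only [GLG.sem, γ₁.sem_update_of_notMem_pvars hX.1, γ₂.sem_update_of_notMem_pvars hX.2]
  | .star γ, X, hX, Ω, E => by
      ext D : 1
      simp only [GLG.sem, γ.sem_update_of_notMem_pvars hX]
  | .dual γ, X, hX, Ω, E => by
      ext D : 1
      simp only [GLG.sem, γ.sem_update_of_notMem_pvars hX]

end

theorem Sharp.sem_eq {φ : GLF L 𝒳 Act V} {m : MuF L 𝒳 Act V} (h : Sharp φ m)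
    (Ω : V → Set (𝒳 → M)) : φ.sem tr Ω = m.sem tr Ω := by
  induction h generalizing Ω with
  | lit p | var X => rfl
  | not _ ih => simp only [GLF.sem, MuF.sem_compl, ih]
  | or _ _ ih₁ ih₂ | test _ _ ih₁ ih₂ => simp only [GLF.sem, GLG.sem, MuF.sem, ih₁, ih₂]
  | act _ ih => simp only [GLF.sem, GLG.sem, MuF.sem, ih]
  | choice _ _ ih₁ ih₂ => simp only [MuF.sem, ← ih₁, ← ih₂, GLF.sem, GLG.sem]
  | seq _ ih => simp only [← ih, GLF.sem, GLG.sem]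
  | dual _ ih => simp only [MuF.sem_compl, ← ih, GLF.sem, GLG.sem]
  | @star γ φ X m hφ hγ _ ih =>
      simp only [GLF.sem, GLG.sem, MuF.sem]
      congr 1
      ext Z
      have hm := ih (Function.update Ω X Z)
      simp only [GLF.sem, Function.update_self, φ.sem_update_of_notMem_pvars tr hφ,
        γ.sem_update_of_notMem_pvars tr hγ] at hm
      simp only [Set.mem_ofPred_eq, modif, hm]

end GLSemantics

section Translation

variable {L : Language} {𝒳 Act V M : Type*} [L.Structure M]

def fillCtl (ℓ : 𝒳) (k : M) (D : Set (𝒳 → M)) : Set (𝒳 → M) →o Set (𝒳 → M) :=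
  ⟨fun Z => {ω | ω ℓ = k}.ite Z D, fun _ _ h => Set.ite_mono _ h subset_rfl⟩

@[simp]
lemma fillCtl_apply (ℓ : 𝒳) (k : M) (D Z : Set (𝒳 → M)) :
    fillCtl ℓ k D Z = {ω | ω ℓ = k}.ite Z D := rfl

section Control

variable (tr : Act → (𝒳 → M) → (𝒳 → M) → Prop) (ℓ : 𝒳) (k : L.Constants)
  (Ωg : V → Set (𝒳 → M))

lemma sem_lit_ctl_eq :
    (GLF.lit (.eq (.var ℓ) k.term) : GLF L 𝒳 Act V).sem tr Ωg = {ω | ω ℓ = (k : M)} := by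
  ext
  simp [GLF.sem, Lit.sem]

lemma sem_lit_ctl_ne :
    (GLF.lit (.ne (.var ℓ) k.term) : GLF L 𝒳 Act V).sem tr Ωg = {ω | ω ℓ = (k : M)}ᶜ := by
  ext
  simp [GLF.sem, Lit.sem]

end Control

variable [DecidableEq 𝒳]

def readCtl (ℓ : 𝒳) (k : M) : Set (𝒳 → M) →o Set (𝒳 → M) :=
  ⟨fun Z => (Function.update · ℓ k) ⁻¹' Z, fun _ _ h => Set.preimage_mono h⟩

@[simp]
lemma mem_readCtl {ℓ : 𝒳} {k : M} {Z : Set (𝒳 → M)} {ω : 𝒳 → M} :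
    ω ∈ readCtl ℓ k Z ↔ Function.update ω ℓ k ∈ Z := Iff.rfl

lemma readCtl_fillCtl_self (ℓ : 𝒳) (k : M) (D Z : Set (𝒳 → M)) :
    readCtl ℓ k (fillCtl ℓ k D Z) = readCtl ℓ k Z := by
  ext ω
  simp [Set.ite]

lemma readCtl_fillCtl_of_ne (ℓ : 𝒳) {k k' : M} (h : k' ≠ k) (D Z : Set (𝒳 → M)) :
    readCtl ℓ k' (fillCtl ℓ k D Z) = readCtl ℓ k' D := by
  ext ω
  simp [Set.ite, h]

def IsAssignment (tr : Act → (𝒳 → M) → (𝒳 → M) → Prop) (asn : 𝒳 → L.Term 𝒳 → Act) : Prop :=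
  ∀ (x : 𝒳) (θ : L.Term 𝒳) (ω ν : 𝒳 → M), tr (asn x θ) ω ν ↔ ν = Function.update ω x (θ.realize ω)

variable {tr : Act → (𝒳 → M) → (𝒳 → M) → Prop} {asn : 𝒳 → L.Term 𝒳 → Act}

lemma sem_act_asn_const (hasn : IsAssignment tr asn) (ℓ : 𝒳) (k : L.Constants)
    (Ωg : V → Set (𝒳 → M)) (S : Set (𝒳 → M)) :
    (GLG.act (asn ℓ k.term) : GLG L 𝒳 Act V).sem tr Ωg S = readCtl ℓ (k : M) S := by
  ext ω
  simp [GLG.sem, hasn ℓ k.term ω]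

variable (ℓ : 𝒳) (k : L.Constants) (g : GLG L 𝒳 Act V) (Ωg : V → Set (𝒳 → M)) (D : Set (𝒳 → M))

lemma sem_muGame (hasn : IsAssignment tr asn) :
    (GLG.seq (.act (asn ℓ k.term))
      (.seq (.star (.seq (.test (.lit (.eq (.var ℓ) k.term))) g))
        (.test (.lit (.ne (.var ℓ) k.term))))).sem tr Ωg D
      = readCtl ℓ (k : M) ((fillCtl ℓ (k : M) D).comp (g.semHom tr Ωg)).lfp := by
  have hite : ∀ Z, {ω | ω ℓ = (k : M)}ᶜ ∩ D ∪ {ω | ω ℓ = (k : M)} ∩ g.sem tr Ωg Z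
      = fillCtl ℓ (k : M) D (g.sem tr Ωg Z) := fun Z => by
    ext ω
    by_cases ω ℓ = (k : M) <;> simp [Set.ite, *]
  rw [GLG.sem, sem_act_asn_const hasn]
  simp only [GLG.sem, sem_lit_ctl_eq, sem_lit_ctl_ne, hite]
  rfl

lemma sem_nuGame (hasn : IsAssignment tr asn) :
    (GLG.seq (.act (asn ℓ k.term))
      (.seq (GLG.cross (.seq (.dual (.test (.lit (.eq (.var ℓ) k.term)))) g))
        (.dual (.test (.lit (.ne (.var ℓ) k.term)))))).sem tr Ωg D
      = readCtl ℓ (k : M) ((fillCtl ℓ (k : M) D).comp (g.semHom tr Ωg)).gfp := by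
  have hite : ∀ Z, ({ω | ω ℓ = (k : M)}ᶜ ∩ Dᶜ)ᶜ ∩ ({ω | ω ℓ = (k : M)} ∩ (g.sem tr Ωg Z)ᶜ)ᶜ
      = fillCtl ℓ (k : M) D (g.sem tr Ωg Z) := fun Z => by
    ext ω
    by_cases ω ℓ = (k : M) <;> simp [Set.ite, *]
  rw [GLG.sem, sem_act_asn_const hasn]
  simp only [GLG.sem, GLG.sem_cross, sem_lit_ctl_eq, sem_lit_ctl_ne, hite]
  rfl

end Translation

section TranslationSemantics

variable {L : Language} {𝒳 Act V M : Type*} [L.Structure M] [DecidableEq 𝒳]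
variable {tr : Act → (𝒳 → M) → (𝒳 → M) → Prop} {asn : 𝒳 → L.Term 𝒳 → Act} {ℓ : 𝒳}
  {c : V ⊕ V → L.Constants}

/-- The invariant of `sem_trGame`: a free `Y` is played as `ℓ := c_Y`, so the goal `D` has to
hold the value of `Y` at control value `c_Y`. -/
def ControlEncodes (ℓ : 𝒳) (c : V ⊕ V → L.Constants) (ϑ : V → Bool) (Ω : V → Set (𝒳 → M))
    (D : Set (𝒳 → M)) (F : Set (V ⊕ V)) : Prop :=
  ∀ Y ∈ F, ϑ (unbar Y) = true ∧ readCtl ℓ (c Y : M) D = barVal Ω Y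

lemma ControlEncodes.stateIndep {ϑ : V → Bool} {Ω : V → Set (𝒳 → M)} {D : Set (𝒳 → M)}
    {F : Set (V ⊕ V)} (h : ControlEncodes ℓ c ϑ Ω D F) : ∀ Y ∈ F, StateIndep ℓ (barVal Ω Y) :=
  fun Y hY => stateIndep_of_preimage_eq (h Y hY).2

variable [DecidableEq V]

lemma ControlEncodes.fillCtl (hc : Function.Injective fun X => (c X : M)) {φ : MuF L 𝒳 Act V}
    {X : V ⊕ V} (hX : bar X ∉ φ.mentions) {ϑ : V → Bool} {Ω : V → Set (𝒳 → M)}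
    {D : Set (𝒳 → M)} (h : ControlEncodes ℓ c ϑ Ω D (φ.freeVars \ {X, bar X}))
    (Z : Set (𝒳 → M)) :
    ControlEncodes ℓ c (dictUp ϑ X) (modif Ω X (readCtl ℓ (c X : M) Z))
      (fillCtl ℓ (c X : M) D Z) φ.freeVars := fun Y hY => by
  rcases eq_or_mem_freeVars_sdiff hX hY with rfl | ⟨hY', hne⟩
  · exact ⟨by simp [dictUp], by rw [barVal_modif_self, readCtl_fillCtl_self]⟩
  · have hcY : (c Y : M) ≠ c X := hc.ne (unbar_ne_unbar_iff.1 hne).1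
    refine ⟨by rw [dictUp, Function.update_of_ne hne]; exact (h Y hY').1, ?_⟩
    rw [barVal_modif_of_unbar_ne _ hne, readCtl_fillCtl_of_ne _ hcY]
    exact (h Y hY').2

theorem sem_trGame (hasn : IsAssignment tr asn) (hc : Function.Injective fun X => (c X : M))
    (Ωg : V → Set (𝒳 → M)) : ∀ {φ : MuF L 𝒳 Act V}, Admissible tr ℓ φ →
    ∀ {ϑ : V → Bool} {Ω : V → Set (𝒳 → M)} {D : Set (𝒳 → M)},
      ControlEncodes ℓ c ϑ Ω D φ.freeVars → (trGame ℓ c asn φ ϑ).sem tr Ωg D = φ.sem tr Ω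
  | .lit p, _, _, _, _, _ => by simp [trGame, GLG.sem, GLF.sem, MuF.sem, glFalse, Lit.sem]
  | .var X, _, ϑ, Ω, D, hD => by
      obtain ⟨hϑ, hX⟩ := hD X rfl
      simpa [trGame, hϑ, sem_act_asn_const hasn, MuF.sem] using hX
  | .or φ ψ, h, ϑ, Ω, D, hD => by
      rw [admissible_or] at h
      simp only [trGame, GLG.sem, MuF.sem,
        sem_trGame hasn hc Ωg h.1 fun Y hY => hD Y (.inl hY),
        sem_trGame hasn hc Ωg h.2 fun Y hY => hD Y (.inr hY)]
  | .and φ ψ, h, ϑ, Ω, D, hD => by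
      rw [admissible_and] at h
      simp only [trGame, GLG.dchoice, GLG.sem, MuF.sem, compl_compl, Set.compl_union,
        sem_trGame hasn hc Ωg h.1 fun Y hY => hD Y (.inl hY),
        sem_trGame hasn hc Ωg h.2 fun Y hY => hD Y (.inr hY)]
  | .dia a φ, h, ϑ, Ω, D, hD => by
      simp only [trGame, GLG.sem, MuF.sem, sem_trGame hasn hc Ωg (admissible_dia.1 h).2 hD]
  | .box a φ, h, ϑ, Ω, D, hD => by
      ext ω
      simp [trGame, GLG.sem, MuF.sem, sem_trGame hasn hc Ωg (admissible_box.1 h).2 hD]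
  | .mu X φ, h, ϑ, Ω, D, hD => by
      obtain ⟨hX, hφ⟩ := admissible_mu.1 h
      rw [trGame, sem_muGame _ _ _ _ _ hasn, MuF.sem_mu tr hX]
      exact map_lfp_comp_eq_lfp (readCtl_fillCtl_self ℓ _ D)
        (fun Z => sem_trGame hasn hc Ωg hφ (hD.fillCtl hc hX Z))
        (fun Z => (MuF.stateIndep_sem hφ (stateIndep_barVal_modif hX hD.stateIndep
          (stateIndep_preimage_update ℓ _ Z))).preimage_eq _)
        ((MuF.stateIndep_sem h hD.stateIndep).preimage_eq _)
  | .nu X φ, h, ϑ, Ω, D, hD => by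
      obtain ⟨hX, hφ⟩ := admissible_nu.1 h
      rw [trGame, sem_nuGame _ _ _ _ _ hasn, MuF.sem_nu tr hX]
      exact map_gfp_comp_eq_gfp (readCtl_fillCtl_self ℓ _ D)
        (fun Z => sem_trGame hasn hc Ωg hφ (hD.fillCtl hc hX Z))
        (fun Z => (MuF.stateIndep_sem hφ (stateIndep_barVal_modif hX hD.stateIndep
          (stateIndep_preimage_update ℓ _ Z))).preimage_eq _)
        ((MuF.stateIndep_sem h hD.stateIndep).preimage_eq _)

end TranslationSemantics

/-- Equi-expressivity: over any assignment structure,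
(1) `𝔄⟦φ⟧_GL = 𝔄⟦φ♯⟧_μ` for every `GL`-formula `φ` (without propositional variables), and
(2) `𝔄⟦ψ⟧_μ = 𝔄⟦ψ♭⟧_GL` for every `Lμ`-formula `ψ` (without free propositional variables),
where `ψ♭ = ⟨ψ^η⟩⊤` and `η` is the dictionary with value `0` everywhere. -/
theorem equi_expressivity (L : Language) (𝒳 Act V : Type*)
    [DecidableEq 𝒳] [DecidableEq V]
    (M : Type*) [L.Structure M]
    (tr : Act → (𝒳 → M) → (𝒳 → M) → Prop)
    -- `L` has deterministic assignments and `M` is an assignment structure: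
    (asn : 𝒳 → L.Term 𝒳 → Act)
    (hasn : ∀ (x : 𝒳) (θ : L.Term 𝒳) (ω ν : 𝒳 → M),
      tr (asn x θ) ω ν ↔ ν = Function.update ω x (θ.realize ω))
    (c0 c1 : L.Constants)
    (h01 : ∀ ω : 𝒳 → M, (Language.Constants.term c0 : L.Term 𝒳).realize ω
        ≠ (Language.Constants.term c1 : L.Term 𝒳).realize ω)
    -- distinct constant symbols `c_X` with pairwise distinct interpretations:
    (c : V ⊕ V → L.Constants)
    (hc : ∀ (X Y : V ⊕ V), X ≠ Y → ∀ ω : 𝒳 → M,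
      (Language.Constants.term (c X) : L.Term 𝒳).realize ω
        ≠ (Language.Constants.term (c Y) : L.Term 𝒳).realize ω)
    -- the control variable `ℓ`:
    (ℓ : 𝒳)
 :
    (∀ (φ : GLF L 𝒳 Act V) (m : MuF L 𝒳 Act V), φ.pvars = ∅ → Sharp φ m →
      ∀ Ω : V → Set (𝒳 → M), φ.sem tr Ω = m.sem tr Ω)
    ∧ (∀ ψ : MuF L 𝒳 Act V, ψ.WF → ψ.freeVars = ∅ → ψ.BoundOnce →
        ℓ ∉ ψ.ovars → (∀ a ∈ ψ.acts, IndepAct tr ℓ a) →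
        ∀ Ω : V → Set (𝒳 → M), ψ.sem tr Ω = (flatF ℓ c asn ψ).sem tr Ω) := by
  have hc' : Function.Injective fun X => (c X : M) := fun X Y hXY => by
    by_contra hne
    exact hc X Y hne (fun _ => c X) (by simpa using hXY)
  refine ⟨fun φ m _ hφm Ω => hφm.sem_eq tr Ω, fun ψ hwf hfree _ hov hacts Ω => ?_⟩
  have hψ := sem_trGame hasn hc' Ω (ϑ := fun _ => false) (Ω := Ω) (D := Set.univ)
    ⟨hwf, hov, hacts⟩ (by simp [ControlEncodes, hfree])
  simp only [flatF, GLF.sem, glTrue, Lit.sem, Set.ofPred_true, hψ]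

end GLMu
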